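/- In the hard instance (A, f, c, v_T) with A = {⊥, g, x, 1, ..., k}, f(⊥)=0, f(g)=1, f(x)=3/10, f(i)=1/5 for i ∈ [k], c(⊥)=0, c(g)=1/10, c(x)=c(i)=1/100, the inspection scheme (g, α = 1/10, p) with p(S ∪ {x}) = 1/(2|T|) for each S ∈ cyclic(T), p({x}) = 2/3 − k/(2|T|), p(∅) = 1/3, is incentive-compatible: the agent's utility from every action is exactly 0. Its principal's utility equals 53/60 − 1/(160·|T|). -/

import Mathlib

/-- The action set of the hard instance: `⊥`, `g`, `x`, and `k` actions `1,…,k`. -/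
inductive HardAction (k : ℕ) where
  | bot | g | x
  | act (i : Fin k)
deriving DecidableEq, Fintype

/-- All cyclic shifts of a subset `T` of `ℤ/k` (identified with `Fin k`). -/
def cyclicShifts {k : ℕ} (T : Finset (Fin k)) : Finset (Finset (Fin k)) :=
  Finset.univ.image (fun t : Fin k => T.image (fun j => j + t))

/-- The part of `S` coming from the `k` actions `1,…,k`, i.e. `S \ {⊥, g, x}`. -/
def kPart {k : ℕ} (S : Finset (HardAction k)) : Finset (Fin k) :=
  Finset.univ.filter (fun i => HardAction.act i ∈ S)

/-- The inspection cost function `v_T` of the hard instance. -/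
noncomputable def vT {k : ℕ} (T : Finset (Fin k)) (S : Finset (HardAction k)) : ℝ :=
  (if (S \ {HardAction.bot, HardAction.g}).Nonempty then 1/40 else 0)
  + (if HardAction.bot ∈ S then 1 else 0) + (if HardAction.g ∈ S then 1 else 0)
  + (1 / (80 * (k : ℝ))) *
    (if kPart S = ∅ then 0
     else if ((kPart S).card : ℝ) < 4 * (k : ℝ) / 5 ∨ kPart S ∈ cyclicShifts T then 1
     else 2)

/-- Success probabilities of the hard instance. -/
noncomputable def hf {k : ℕ} : HardAction k → ℝ
  | .bot => 0
  | .g => 1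
  | .x => 3/10
  | .act _ => 1/5

/-- Costs of the hard instance. -/
noncomputable def hc {k : ℕ} : HardAction k → ℝ
  | .bot => 0
  | .g => 1/10
  | .x => 1/100
  | .act _ => 1/100

/-!
Since `k` is prime, a nonempty proper subset of `ℤ/k` has trivial stabilizer under translation
(a stabilizer is a subgroup, hence `⊥` or `⊤`), so `T` has exactly `k` distinct cyclic shifts,
and every point lies in exactly `|T|` of them. The scheme puts mass `1/(2|T|)` on each of the `k`
sets `S ∪ {x}`, so `x` is inspected with probability `p({x}) + k/(2|T|) = 2/3` and each `i` with
probability `|T|/(2|T|) = 1/2`, which makes every action break even; the expected inspection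
cost is `(2/3)·(1/40) + k·(1/(2|T|))·(1/(80k)) = 1/60 + 1/(160|T|)`.
-/

open Finset Pointwise

theorem Finset.image_add_right_eq_vadd {G : Type*} [AddCommGroup G] [DecidableEq G]
    (T : Finset G) (t : G) : T.image (· + t) = t +ᵥ T := by
  simp only [← Finset.image_vadd, vadd_eq_add, add_comm]

theorem Finset.eq_univ_of_vadd_eq_self_of_prime_card {G : Type*} [AddGroup G] [Fintype G]
    [DecidableEq G] [Fact (Nat.card G).Prime] {T : Finset G} (hT : T.Nonempty) {d : G}
    (hd : d ≠ 0) (hdT : d +ᵥ T = T) : T = univ := by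
  have hstab : AddAction.stabilizer G T = ⊤ :=
    (AddSubgroup.eq_bot_or_eq_top_of_prime_card _).resolve_left fun h =>
      hd (by simpa [h] using AddAction.mem_stabilizer_iff.mpr hdT)
  obtain ⟨j, hj⟩ := hT
  refine eq_univ_of_forall fun y => ?_
  have : (y - j) +ᵥ T = T := AddAction.mem_stabilizer_iff.mp (hstab ▸ AddSubgroup.mem_top _)
  rw [← this]
  exact Finset.mem_vadd_finset.mpr ⟨j, hj, by simp⟩

theorem Finset.injective_image_add_right_of_prime_card {G : Type*} [AddCommGroup G] [Fintype G]
    [DecidableEq G] [Fact (Nat.card G).Prime] {T : Finset G} (hT : T.Nonempty) (hTu : T ≠ univ) :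
    Function.Injective fun t : G => T.image (· + t) := by
  intro s t hst
  simp only [image_add_right_eq_vadd] at hst
  by_contra hne
  refine hTu (eq_univ_of_vadd_eq_self_of_prime_card hT (sub_ne_zero.mpr hne) ?_)
  rw [sub_eq_neg_add, ← vadd_vadd, hst, vadd_vadd, neg_add_cancel, zero_vadd]

theorem Finset.card_filter_mem_image_add_right {G : Type*} [AddGroup G] [Fintype G]
    [DecidableEq G] (T : Finset G) (i : G) :
    #{t | i ∈ T.image (· + t)} = #T := by
  have : ({t | i ∈ T.image (· + t)} : Finset G) = T.image (fun a => -a + i) := by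
    ext t
    simp only [mem_filter, mem_univ, true_and, mem_image]
    constructor
    · rintro ⟨a, ha, rfl⟩; exact ⟨a, ha, neg_add_cancel_left a t⟩
    · rintro ⟨a, ha, rfl⟩; exact ⟨a, ha, add_neg_cancel_left a i⟩
  rw [this, card_image_of_injective _ fun a b h => neg_injective (add_right_cancel h)]

theorem Nat.ceil_four_mul_div_five_lt {k : ℕ} (hk : 5 ≤ k) : ⌈4 * (k : ℚ) / 5⌉₊ < k := by
  have : 4 * (k : ℚ) / 5 ≤ ((k - 1 : ℕ) : ℚ) := by
    rw [Nat.cast_sub (by omega)]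
    have : (5 : ℚ) ≤ k := by exact_mod_cast hk
    linarith
  have := Nat.ceil_le.mpr this
  omega

section CyclicShifts

variable {k : ℕ} {T : Finset (Fin k)}

theorem nonempty_of_mem_cyclicShifts (hT : T.Nonempty) {S : Finset (Fin k)}
    (hS : S ∈ cyclicShifts T) : S.Nonempty := by
  obtain ⟨t, -, rfl⟩ := mem_image.mp hS
  exact hT.image _

variable (hk : k.Prime) (hT : T.Nonempty) (hTu : T ≠ univ)
include hk hT hTu

theorem injective_cyclicShift : Function.Injective fun t : Fin k => T.image (· + t) := by
  have : NeZero k := ⟨hk.ne_zero⟩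
  have : Fact (Nat.card (Fin k)).Prime := ⟨by simpa using hk⟩
  exact injective_image_add_right_of_prime_card hT hTu

theorem card_cyclicShifts : #(cyclicShifts T) = k := by
  rw [cyclicShifts, card_image_of_injective _ (injective_cyclicShift hk hT hTu), card_univ,
    Fintype.card_fin]

theorem card_filter_mem_cyclicShifts (i : Fin k) : #{S ∈ cyclicShifts T | i ∈ S} = #T := by
  have : NeZero k := ⟨hk.ne_zero⟩
  rw [cyclicShifts, filter_image, card_image_of_injective _ (injective_cyclicShift hk hT hTu)]
  exact card_filter_mem_image_add_right T i

end CyclicShifts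

namespace HardAction

variable {k : ℕ}

theorem act_injective : Function.Injective (act : Fin k → HardAction k) :=
  fun _ _ h => by cases h; rfl

def insertX (S : Finset (Fin k)) : Finset (HardAction k) :=
  insert x (S.image act)

@[simp] theorem x_mem_insertX (S : Finset (Fin k)) : x ∈ insertX S := mem_insert_self _ _

@[simp] theorem bot_notMem_insertX (S : Finset (Fin k)) : bot ∉ insertX S := by simp [insertX]

@[simp] theorem g_notMem_insertX (S : Finset (Fin k)) : g ∉ insertX S := by simp [insertX]

@[simp] theorem act_mem_insertX {S : Finset (Fin k)} {i : Fin k} : act i ∈ insertX S ↔ i ∈ S := by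
  simp [insertX, act_injective.eq_iff]

theorem insertX_injective : Function.Injective (insertX : Finset (Fin k) → _) := by
  intro S S' h
  ext i
  rw [← act_mem_insertX, h, act_mem_insertX]

theorem insertX_ne_empty (S : Finset (Fin k)) : insertX S ≠ ∅ :=
  ne_empty_of_mem (x_mem_insertX S)

theorem insertX_ne_singleton_x {S : Finset (Fin k)} (hS : S.Nonempty) : insertX S ≠ {x} := by
  obtain ⟨i, hi⟩ := hS
  intro h
  simpa [h] using act_mem_insertX.mpr hi

theorem kPart_insertX (S : Finset (Fin k)) : kPart (insertX S) = S := by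
  ext i
  simp [kPart]

theorem sum_univ_eq_of_support {M : Type*} [AddCommMonoid M] {𝒮 : Finset (Finset (Fin k))}
    (h𝒮 : ∀ S ∈ 𝒮, S.Nonempty) {F : Finset (HardAction k) → M}
    (hF : ∀ Q, Q ≠ ∅ → Q ≠ {x} → (∀ S ∈ 𝒮, Q ≠ insertX S) → F Q = 0) :
    ∑ Q, F Q = F ∅ + F {x} + ∑ S ∈ 𝒮, F (insertX S) := by
  have hempty : ∅ ∉ insert {x} (𝒮.image insertX) := by
    simp [eq_comm (a := ∅), insertX_ne_empty]
  have hx : {x} ∉ 𝒮.image insertX := by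
    simp only [mem_image, not_exists, not_and]
    exact fun S hS => insertX_ne_singleton_x (h𝒮 S hS)
  rw [← sum_subset (subset_univ (insert ∅ (insert {x} (𝒮.image insertX)))), sum_insert hempty,
    sum_insert hx, sum_image insertX_injective.injOn, add_assoc]
  intro Q _ hQ
  simp only [mem_insert, mem_image, not_or, not_exists, not_and] at hQ
  exact hF Q hQ.1 hQ.2.1 fun S hS h => hQ.2.2 S hS h.symm

end HardAction

open HardAction

theorem vT_empty {k : ℕ} (T : Finset (Fin k)) : vT T ∅ = 0 := by
  simp [vT, kPart]

theorem vT_singleton_x {k : ℕ} (T : Finset (Fin k)) : vT T {x} = 1 / 40 := by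
  have : ({x} \ {bot, g} : Finset (HardAction k)).Nonempty := ⟨x, by simp⟩
  simp [vT, kPart, this]

theorem vT_insertX {k : ℕ} {T S : Finset (Fin k)} (hS : S ∈ cyclicShifts T) (hS0 : S.Nonempty) :
    vT T (insertX S) = 1 / 40 + 1 / (80 * (k : ℝ)) := by
  have : (insertX S \ {bot, g}).Nonempty := ⟨x, by simp⟩
  simp [vT, kPart_insertX, this, hS0.ne_empty, hS]

section InspectionScheme

variable {k : ℕ} {T : Finset (Fin k)} {p : Finset (HardAction k) → ℝ}
  (hk : k.Prime) (hT : T.Nonempty) (hTu : T ≠ univ)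
  (hpc : ∀ S ∈ cyclicShifts T, p (insertX S) = 1 / (2 * (#T : ℝ)))
  (hp0 : ∀ Q, Q ≠ ∅ → Q ≠ {x} → (∀ S ∈ cyclicShifts T, Q ≠ insertX S) → p Q = 0)
include hk hT hTu hpc hp0

theorem sum_filter_g_or_x_eq (hpx : p {x} = 2 / 3 - (k : ℝ) / (2 * (#T : ℝ))) :
    ∑ Q with g ∈ Q ∨ x ∈ Q, p Q = 2 / 3 := by
  rw [sum_filter, sum_univ_eq_of_support (fun S => nonempty_of_mem_cyclicShifts hT)
    fun Q h₁ h₂ h₃ => by simp [hp0 Q h₁ h₂ h₃]]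
  simp only [notMem_empty, or_self, if_false, mem_singleton, or_true, if_true, x_mem_insertX,
    zero_add]
  rw [sum_congr rfl hpc, sum_const, card_cyclicShifts hk hT hTu, hpx, nsmul_eq_mul]
  have : (#T : ℝ) ≠ 0 := by exact_mod_cast hT.card_pos.ne'
  field_simp
  ring

theorem sum_filter_g_or_act_eq (i : Fin k) : ∑ Q with g ∈ Q ∨ act i ∈ Q, p Q = 1 / 2 := by
  rw [sum_filter, sum_univ_eq_of_support (fun S => nonempty_of_mem_cyclicShifts hT)
    fun Q h₁ h₂ h₃ => by simp [hp0 Q h₁ h₂ h₃]]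
  simp only [notMem_empty, or_self, if_false, mem_singleton, reduceCtorEq, g_notMem_insertX,
    act_mem_insertX, false_or, zero_add]
  rw [← sum_filter, sum_congr rfl fun S hS => hpc S (mem_filter.mp hS).1, sum_const,
    card_filter_mem_cyclicShifts hk hT hTu, nsmul_eq_mul]
  have : (#T : ℝ) ≠ 0 := by exact_mod_cast hT.card_pos.ne'
  field_simp

theorem sum_mul_vT_eq (hpx : p {x} = 2 / 3 - (k : ℝ) / (2 * (#T : ℝ))) (hpe : p ∅ = 1 / 3) :
    ∑ Q, p Q * vT T Q = 1 / 60 + 1 / (160 * (#T : ℝ)) := by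
  rw [sum_univ_eq_of_support (fun S => nonempty_of_mem_cyclicShifts hT)
    fun Q h₁ h₂ h₃ => by rw [hp0 Q h₁ h₂ h₃, zero_mul]]
  rw [vT_empty, vT_singleton_x, hpx, hpe, sum_congr rfl fun S hS => by
    rw [hpc S hS, vT_insertX hS (nonempty_of_mem_cyclicShifts hT hS)], sum_const,
    card_cyclicShifts hk hT hTu, nsmul_eq_mul]
  have : (#T : ℝ) ≠ 0 := by exact_mod_cast hT.card_pos.ne'
  have : (k : ℝ) ≠ 0 := by exact_mod_cast hk.ne_zero
  field_simp
  ring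

end InspectionScheme

theorem stmt18 (k : ℕ) (hk : Nat.Prime k) (hk5 : 5 < k)
    (T : Finset (Fin k)) (hT : T.card = ⌈(4 * (k : ℚ) / 5)⌉₊)
    (p : Finset (HardAction k) → ℝ)
    (hpc : ∀ S ∈ cyclicShifts T,
      p (insert HardAction.x (S.image HardAction.act)) = 1 / (2 * (T.card : ℝ)))
    (hpx : p {HardAction.x} = 2/3 - (k : ℝ) / (2 * (T.card : ℝ)))
    (hpe : p ∅ = 1/3)
    (hp0 : ∀ Q : Finset (HardAction k), Q ≠ ∅ → Q ≠ {HardAction.x} →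
      (∀ S ∈ cyclicShifts T, Q ≠ insert HardAction.x (S.image HardAction.act)) →
      p Q = 0) :
    -- the scheme (g, 1/10, p) gives the agent utility exactly 0 from every action
    (∀ j : HardAction k,
      (if j = HardAction.g then (1/10 : ℝ) * hf j - hc j
       else (1/10 : ℝ) * hf j *
          (1 - ∑ Q ∈ Finset.univ.filter
            (fun Q : Finset (HardAction k) => HardAction.g ∈ Q ∨ j ∈ Q), p Q)
        - hc j) = 0)
    -- and the principal's utility equals 53/60 - 1/(160·|T|)
    ∧ (1 - (1/10 : ℝ)) * hf (HardAction.g : HardAction k)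
        - ∑ Q : Finset (HardAction k), p Q * vT T Q
      = 53/60 - 1 / (160 * (T.card : ℝ)) := by
  have hT0 : T.Nonempty := by
    rw [← card_pos, hT]
    exact Nat.ceil_pos.mpr (by positivity)
  have hTu : T ≠ univ := by
    rintro rfl
    have := Nat.ceil_four_mul_div_five_lt hk5.le
    rw [← hT, card_univ, Fintype.card_fin] at this
    exact this.false
  refine ⟨fun j => ?_, ?_⟩
  · cases j with
    | bot => simp [hf, hc]
    | g => norm_num [hf, hc]
    | x =>
      rw [if_neg (by simp), sum_filter_g_or_x_eq hk hT0 hTu hpc hp0 hpx]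
      norm_num [hf, hc]
    | act i =>
      rw [if_neg (by simp), sum_filter_g_or_act_eq hk hT0 hTu hpc hp0]
      norm_num [hf, hc]
  · rw [sum_mul_vT_eq hk hT0 hTu hpc hp0 hpx hpe]
    norm_num [hf]
    ring
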